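/- arXiv:1504.00473 — 5 statements merged into one kernel-verified Lean document; each statement's English description precedes it below -/
import Mathlib

section
/- In an effect algebra E, if x is a principal element, t ∈ E, and t ≤ x, then the join t ∨ x' exists in E and equals t ⊕ x'. -/
/-- An effect algebra: a set with a partially defined binary operation `oplus`
(modeled by `Option`), elements `zero` and `one`, satisfying commutativity,
associativity, unique orthosupplementation (`compl`) and the zero-unit law. -/
structure EffectAlgebra (E : Type*) where
  oplus : E → E → Option E
  zero : E
  one : E
  comm : ∀ p q, oplus p q = oplus q p
  assoc : ∀ p q r s t, oplus q r = some s → oplus p s = some t →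
    ∃ u, oplus p q = some u ∧ oplus u r = some t
  compl : E → E
  compl_def : ∀ p, oplus p (compl p) = some one
  compl_unique : ∀ p q, oplus p q = some one → q = compl p
  zero_unit : ∀ p, (oplus one p).isSome → p = zero

namespace EffectAlgebra

variable {E : Type*} (A : EffectAlgebra E)

/-- `p ≤ q` iff there is `r` with `p ⊕ r = q`. -/
def le (p q : E) : Prop := ∃ r, A.oplus p r = some q

/-- `p ⊥ q` iff `p ⊕ q` is defined. -/
def Orth (p q : E) : Prop := (A.oplus p q).isSome

/-- `j` is the join (least upper bound) of `p` and `q`. -/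
def IsJoin (p q j : E) : Prop :=
  A.le p j ∧ A.le q j ∧ ∀ u, A.le p u → A.le q u → A.le j u

/-- `m` is the meet (greatest lower bound) of `p` and `q`. -/
def IsMeet (p q m : E) : Prop :=
  A.le m p ∧ A.le m q ∧ ∀ t, A.le t p → A.le t q → A.le t m

/-- `x` is sharp iff `x ∧ x' = 0`. -/
def Sharp (x : E) : Prop := A.IsMeet x (A.compl x) A.zero

/-- `x` is principal iff `p ⊥ q`, `p ≤ x`, `q ≤ x` imply `p ⊕ q ≤ x`. -/
def Principal (x : E) : Prop :=
  ∀ p q r, A.oplus p q = some r → A.le p x → A.le q x → A.le r x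

end EffectAlgebra


namespace EffectAlgebra
variable {E : Type*} (A : EffectAlgebra E)

lemma assoc_rev {a b c v w : E} (h1 : A.oplus a b = some v)
    (h2 : A.oplus v c = some w) :
    ∃ s, A.oplus b c = some s ∧ A.oplus a s = some w := by
  obtain ⟨u, hu1, hu2⟩ := A.assoc c a b v w h1 ((A.comm c v) ▸ h2)
  obtain ⟨s, hs1, hs2⟩ := A.assoc b c a u w ((A.comm c a) ▸ hu1) ((A.comm b u) ▸ hu2)
  exact ⟨s, hs1, (A.comm a s) ▸ hs2⟩

lemma compl_compl (p : E) : A.compl (A.compl p) = p :=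
  (A.compl_unique (A.compl p) p ((A.comm (A.compl p) p) ▸ A.compl_def p)).symm

end EffectAlgebra

/-- If `x` is principal and `t ≤ x`, then `t ∨ x'` exists and equals `t ⊕ x'`. -/
theorem stmt_4 {E : Type*} (A : EffectAlgebra E) (x t : E)
    (hx : A.Principal x) (ht : A.le t x) :
    ∃ j, A.oplus t (A.compl x) = some j ∧ A.IsJoin t (A.compl x) j := by
  obtain ⟨r, hr⟩ := ht
  have h1 : A.oplus x (A.compl x) = some A.one := A.compl_def x
  obtain ⟨j, hj1, hj2⟩ := A.assoc (A.compl x) t r x A.one hr ((A.comm (A.compl x) x) ▸ h1)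
  have htx : A.oplus t (A.compl x) = some j := (A.comm t (A.compl x)) ▸ hj1
  refine ⟨j, htx, ⟨A.compl x, htx⟩, ⟨t, hj1⟩, ?_⟩
  intro c hc1 hc2
  obtain ⟨a, ha⟩ := hc1
  obtain ⟨b, hb⟩ := hc2
  have hcc : A.oplus c (A.compl c) = some A.one := A.compl_def c
  -- compl c ≤ x
  obtain ⟨s, hs1, hs2⟩ := A.assoc_rev hb hcc
  have hsx : s = x := by
    have := A.compl_unique (A.compl x) s hs2
    rw [this, A.compl_compl]
  rw [hsx] at hs1
  have hucx : A.le (A.compl c) x := ⟨b, (A.comm b (A.compl c)) ▸ hs1⟩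
  -- t ⊥ compl c, value v
  obtain ⟨v, hv1, hv2⟩ := A.assoc (A.compl c) t a c A.one ha ((A.comm (A.compl c) c) ▸ hcc)
  -- v ≤ x by principality
  obtain ⟨w, hw⟩ := hx (A.compl c) t v hv1 hucx ⟨r, hr⟩
  -- w ⊕ x' = a
  obtain ⟨s2, hs21, hs22⟩ := A.assoc_rev hw h1
  have hs2v : s2 = A.compl v := A.compl_unique v s2 hs22
  have hav : a = A.compl v := A.compl_unique v a hv2
  rw [hs2v, ← hav] at hs21
  -- conclude j ⊕ w = c
  obtain ⟨m, hm1, hm2⟩ := A.assoc t (A.compl x) w a c ((A.comm w (A.compl x)) ▸ hs21) ha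
  have : m = j := by
    rw [htx] at hm1; exact (Option.some_inj.mp hm1).symm
  exact ⟨w, this ▸ hm2⟩
end

section
/- In an effect algebra E, if the set P_E of principal elements is closed under ⊕ (i.e., x, y ∈ P_E and x ⊥ y imply x ⊕ y ∈ P_E), then for all x, y ∈ P_E with x ⊥ y one has x' ∧ (x ⊕ y) = y (the meet exists and equals y). -/
theorem EffectAlgebra.cancel_aux {E : Type*} (A : EffectAlgebra E)
    (a b c e : E) (h1 : A.oplus a b = some e) (h2 : A.oplus a c = some e) :
    b = c := by
  have he : A.oplus (A.compl e) e = some A.one := by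
    rw [A.comm]; exact A.compl_def e
  obtain ⟨u, hu1, hu2⟩ := A.assoc (A.compl e) a b e A.one h1 he
  obtain ⟨u', hu1', hu2'⟩ := A.assoc (A.compl e) a c e A.one h2 he
  have huu : u = u' := by
    have := hu1.symm.trans hu1'
    exact Option.some.inj this
  have hb := A.compl_unique u b hu2
  have hc := A.compl_unique u' c hu2'
  rw [hb, hc, huu]

/-- If the principal elements are closed under `⊕`, then `x' ∧ (x ⊕ y) = y`
for principal `x, y` with `x ⊥ y`. -/
theorem stmt_9 {E : Type*} (A : EffectAlgebra E)
    (hcl : ∀ x y s, A.Principal x → A.Principal y → A.oplus x y = some s →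
      A.Principal s) :
    ∀ x y s, A.Principal x → A.Principal y → A.oplus x y = some s →
      A.IsMeet (A.compl x) s y := by
  intro x y s hx hy hxy
  have hs := hcl x y s hx hy hxy
  have hss : A.oplus (A.compl s) s = some A.one := by
    rw [A.comm]; exact A.compl_def s
  refine ⟨?_, ⟨x, by rw [A.comm]; exact hxy⟩, ?_⟩
  · -- y ≤ compl x
    obtain ⟨u, hu1, hu2⟩ := A.assoc (A.compl s) y x s A.one
      (by rw [A.comm]; exact hxy) hss
    have hxu : A.oplus x u = some A.one := by rw [A.comm]; exact hu2
    have := A.compl_unique x u hxu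
    exact ⟨A.compl s, by rw [← this, A.comm]; exact hu1⟩
  · rintro t ⟨a, hta⟩ ⟨b, htb⟩
    -- t ⊥ x : from t ⊕ a = x' and x ⊕ x' = 1
    obtain ⟨u, hxt, hua⟩ := A.assoc x t a (A.compl x) A.one hta (A.compl_def x)
    -- u = x ⊕ t ≤ s since s principal
    obtain ⟨v, huv⟩ := hs x t u hxt ⟨y, hxy⟩ ⟨b, htb⟩
    -- reassociate: (v ⊕ t) ⊕ x = s
    obtain ⟨w, hvt, hwx⟩ := A.assoc v t x u s
      (by rw [A.comm]; exact hxt) (by rw [A.comm]; exact huv)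
    have hxw : A.oplus x w = some s := by rw [A.comm]; exact hwx
    have hwy : w = y := A.cancel_aux x w y s hxw hxy
    exact ⟨v, by rw [A.comm, ← hwy]; exact hvt⟩
end

section
/- Let E be an effect algebra in which the sharp elements coincide with the principal elements (S_E = P_E). Then S_E is closed under ⊕ if and only if for every x, y ∈ S_E with x ≤ y, the orthomodular identity x ∨ (x' ∧ y) = y holds (with the relevant meets and joins existing). -/
namespace EffectAlgebra
variable {E : Type*} (A : EffectAlgebra E)

lemma assoc' {a b c d t : E} (h1 : A.oplus a b = some d) (h2 : A.oplus d c = some t) :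
    ∃ u, A.oplus b c = some u ∧ A.oplus a u = some t := by
  obtain ⟨u1, hu1, hu2⟩ := A.assoc c a b d t h1 (by rw [A.comm]; exact h2)
  obtain ⟨u2, hv1, hv2⟩ := A.assoc b c a u1 t hu1 (by rw [A.comm]; exact hu2)
  exact ⟨u2, hv1, by rw [A.comm]; exact hv2⟩

lemma compl_one : A.compl A.one = A.zero :=
  A.zero_unit _ (by rw [A.compl_def]; rfl)

lemma one_oplus_zero : A.oplus A.one A.zero = some A.one := by
  rw [← A.compl_one]; exact A.compl_def A.one

lemma zero_oplus (p : E) : A.oplus A.zero p = some p := by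
  obtain ⟨u, hu1, hu2⟩ := A.assoc A.zero p (A.compl p) A.one A.one (A.compl_def p)
    (by rw [A.comm]; exact A.one_oplus_zero)
  have h1 : A.compl u = A.compl p := ((A.compl_unique u (A.compl p) hu2).symm).trans rfl
  have h2 : u = p := by
    have := congrArg A.compl h1; rwa [A.compl_compl, A.compl_compl] at this
  rwa [h2] at hu1

lemma oplus_zero (p : E) : A.oplus p A.zero = some p := by
  rw [A.comm]; exact A.zero_oplus p

lemma cancel {a b c d : E} (h1 : A.oplus a b = some d) (h2 : A.oplus a c = some d) : b = c := by
  obtain ⟨u, hu1, hu2⟩ := A.assoc (A.compl d) a b d A.one h1 (by rw [A.comm]; exact A.compl_def d)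
  obtain ⟨v, hv1, hv2⟩ := A.assoc (A.compl d) a c d A.one h2 (by rw [A.comm]; exact A.compl_def d)
  have huv : u = v := by rw [hu1] at hv1; injection hv1
  subst huv
  exact (A.compl_unique u b hu2).trans (A.compl_unique u c hv2).symm

lemma sub_compl {a b c : E} (h : A.oplus a b = some c) :
    A.oplus b (A.compl c) = some (A.compl a) := by
  obtain ⟨u, hu1, hu2⟩ := A.assoc' h (A.compl_def c)
  rwa [A.compl_unique a u hu2] at hu1

lemma le_refl (p : E) : A.le p p := ⟨A.zero, A.oplus_zero p⟩

lemma zero_le (p : E) : A.le A.zero p := ⟨p, A.zero_oplus p⟩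

lemma le_trans {a b c : E} (h1 : A.le a b) (h2 : A.le b c) : A.le a c := by
  obtain ⟨u, hu⟩ := h1; obtain ⟨v, hv⟩ := h2
  obtain ⟨w, _, hw2⟩ := A.assoc' hu hv
  exact ⟨w, hw2⟩

lemma le_compl_of_orth {a b c : E} (h : A.oplus a b = some c) : A.le b (A.compl a) :=
  ⟨A.compl c, A.sub_compl h⟩

lemma compl_le_compl {a b : E} (h : A.le a b) : A.le (A.compl b) (A.compl a) := by
  obtain ⟨u, hu⟩ := h
  exact ⟨u, by rw [A.comm]; exact A.sub_compl hu⟩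

lemma orth_of_le_compl {a b : E} (h : A.le b (A.compl a)) : ∃ c, A.oplus a b = some c := by
  obtain ⟨w, hw⟩ := h
  obtain ⟨u, hu1, _⟩ := A.assoc a b w (A.compl a) A.one hw (A.compl_def a)
  exact ⟨u, hu1⟩

lemma le_antisymm {a b : E} (h1 : A.le a b) (h2 : A.le b a) : a = b := by
  obtain ⟨u, hu⟩ := h1; obtain ⟨v, hv⟩ := h2
  obtain ⟨w, hw1, hw2⟩ := A.assoc' hu hv
  have hw0 : w = A.zero := A.cancel hw2 (A.oplus_zero a)
  subst hw0
  obtain ⟨s, hs1, hs2⟩ := A.assoc' hw1 (A.zero_oplus A.one)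
  have hv0 : v = A.zero := A.zero_unit v (by rw [A.comm] at hs1; rw [hs1]; rfl)
  subst hv0
  have hu0 : u = A.zero := by
    have := (A.oplus_zero u).symm.trans hw1; injection this
  subst hu0
  have := (A.oplus_zero a).symm.trans hu; injection this

lemma sharp_compl {x : E} (h : A.Sharp x) : A.Sharp (A.compl x) := by
  obtain ⟨h1, h2, h3⟩ := h
  exact ⟨h2, by rwa [A.compl_compl], fun t ht1 ht2 => h3 t (by rwa [A.compl_compl] at ht2) ht1⟩

end EffectAlgebra

/-- If `S_E = P_E`, then `S_E` is closed under `⊕` iff the orthomodular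
identity `x ∨ (x' ∧ y) = y` holds for sharp `x ≤ y`. -/
theorem stmt_11 {E : Type*} (A : EffectAlgebra E)
    (hSP : ∀ x, A.Sharp x ↔ A.Principal x) :
    (∀ x y s, A.Sharp x → A.Sharp y → A.oplus x y = some s → A.Sharp s) ↔
      (∀ x y, A.Sharp x → A.Sharp y → A.le x y →
        ∃ m, A.IsMeet (A.compl x) y m ∧ A.IsJoin x m y) := by
  constructor
  · -- closure ⇒ OMI (in fact hSP alone suffices)
    intro _ x y hx hy hle
    obtain ⟨r, hxy⟩ := hle
    have hpx' : A.Principal (A.compl x) := (hSP _).mp (A.sharp_compl hx)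
    have hpy : A.Principal y := (hSP _).mp hy
    refine ⟨r, ⟨A.le_compl_of_orth hxy, ⟨x, by rw [A.comm]; exact hxy⟩, ?_⟩,
      ⟨⟨r, hxy⟩, ⟨x, by rw [A.comm]; exact hxy⟩, ?_⟩⟩
    · -- meet: t ≤ x', t ≤ y ⇒ t ≤ r
      intro t ht1 ht2
      obtain ⟨u, hu⟩ := A.orth_of_le_compl ht1
      have huy : A.le u y := hpy x t u hu ⟨r, hxy⟩ ht2
      obtain ⟨v, hv⟩ := huy
      obtain ⟨w, hw1, hw2⟩ := A.assoc' hu hv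
      have hwr : w = r := A.cancel hw2 hxy
      exact ⟨v, by rwa [hwr] at hw1⟩
    · -- join: x ≤ u, r ≤ u ⇒ y ≤ u
      intro u hxu hru
      have hux : A.le (A.compl u) (A.compl x) := A.compl_le_compl hxu
      have hur : A.le (A.compl u) (A.compl r) := A.compl_le_compl hru
      obtain ⟨c, hc⟩ := A.orth_of_le_compl hur
      have hcx : A.le c (A.compl x) := hpx' r (A.compl u) c hc (A.le_compl_of_orth hxy) hux
      obtain ⟨d, hd⟩ := hcx
      obtain ⟨w1, hw11, hw12⟩ := A.assoc x c d (A.compl x) A.one hd (A.compl_def x)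
      obtain ⟨w2, hw21, hw22⟩ := A.assoc x r (A.compl u) c w1 hc hw11
      have hw2y : w2 = y := by have := hw21.symm.trans hxy; injection this
      rw [hw2y] at hw22
      obtain ⟨w3, hw31, hw32⟩ := A.assoc' hw22 hw12
      have : w3 = A.compl y := A.compl_unique y w3 hw32
      rw [this] at hw31
      have huy : A.le (A.compl u) (A.compl y) := ⟨d, hw31⟩
      have := A.compl_le_compl huy
      rwa [A.compl_compl, A.compl_compl] at this
  · -- OMI ⇒ closure
    intro H x y s hx hy hxy
    have hs1 : A.oplus s (A.compl s) = some A.one := A.compl_def s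
    obtain ⟨u1, hys', hu1⟩ := A.assoc' hxy hs1
    have hys'x : u1 = A.compl x := A.compl_unique x u1 hu1
    rw [hys'x] at hys'
    obtain ⟨u2, hxs', hu2⟩ := A.assoc' (show A.oplus y x = some s by rw [A.comm]; exact hxy) hs1
    have hxs'y : u2 = A.compl y := A.compl_unique y u2 hu2
    rw [hxs'y] at hxs'
    -- hys' : y ⊕ s' = x',  hxs' : x ⊕ s' = y'
    have hy' : A.Sharp (A.compl y) := A.sharp_compl hy
    have hpy' : A.Principal (A.compl y) := (hSP _).mp hy'
    have hpx' : A.Principal (A.compl x) := (hSP _).mp (A.sharp_compl hx)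
    obtain ⟨m, hmeet, hjoin⟩ := H x (A.compl y) hx hy' ⟨A.compl s, hxs'⟩
    obtain ⟨c, hc⟩ := A.orth_of_le_compl hmeet.1
    have hcy : A.le c (A.compl y) := hpy' x m c hc hjoin.1 hmeet.2.1
    have hyc : A.le (A.compl y) c := hjoin.2.2 c ⟨m, hc⟩ ⟨x, by rw [A.comm]; exact hc⟩
    have hcy' : c = A.compl y := A.le_antisymm hcy hyc
    rw [hcy'] at hc
    have hms : m = A.compl s := A.cancel hc hxs'
    rw [hms] at hmeet
    -- hmeet : IsMeet x' y' s'
    refine ⟨A.zero_le s, A.zero_le (A.compl s), ?_⟩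
    intro t ht1 ht2
    have ht1' : A.le t (A.compl (A.compl s)) := by rwa [A.compl_compl]
    obtain ⟨c, hc⟩ := A.orth_of_le_compl ht1'
    have hs'x : A.le (A.compl s) (A.compl x) := ⟨y, by rw [A.comm]; exact hys'⟩
    have hs'y : A.le (A.compl s) (A.compl y) := ⟨x, by rw [A.comm]; exact hxs'⟩
    have hcx : A.le c (A.compl x) :=
      hpx' (A.compl s) t c hc hs'x (A.le_trans ht2 hs'x)
    have hcy2 : A.le c (A.compl y) :=
      hpy' (A.compl s) t c hc hs'y (A.le_trans ht2 hs'y)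
    have hcs' : A.le c (A.compl s) := hmeet.2.2 c hcx hcy2
    obtain ⟨d, hd⟩ := hcs'
    obtain ⟨w, hw1, hw2⟩ := A.assoc' hc hd
    have hw0 : w = A.zero := A.cancel hw2 (A.oplus_zero (A.compl s))
    exact ⟨d, by rwa [hw0] at hw1⟩
end

section
/- Let (Q, ·) be a totally symmetric quasigroup. Define E(Q,·) on the set (Q × {0}) ∪ (Q × {1}) ∪ {0, 1} with: (q₁,0) ⊕ (q₂,0) = (q₁·q₂, 1); (q,0) ⊕ (q,1) = (q,1) ⊕ (q,0) = 1; 0 ⊕ x = x ⊕ 0 = x; and ⊕ undefined otherwise. Then E(Q,·) is an effect algebra. -/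
/-- The underlying set `(Q × {0}) ∪ (Q × {1}) ∪ {0, 1}` of `E(Q,·)`:
`lo q` is `(q,0)`, `hi q` is `(q,1)`. -/
inductive EQCarrier (Q : Type*) where
  | zero : EQCarrier Q
  | one : EQCarrier Q
  | lo : Q → EQCarrier Q
  | hi : Q → EQCarrier Q

/-- The partial operation of `E(Q,·)`: `(q₁,0) ⊕ (q₂,0) = (q₁·q₂,1)`,
`(q,0) ⊕ (q,1) = (q,1) ⊕ (q,0) = 1`, `0 ⊕ x = x ⊕ 0 = x`, undefined
otherwise. -/
def eqOplus {Q : Type*} [DecidableEq Q] (mul : Q → Q → Q) :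
    EQCarrier Q → EQCarrier Q → Option (EQCarrier Q)
  | .zero, x => some x
  | x, .zero => some x
  | .lo a, .lo b => some (.hi (mul a b))
  | .lo a, .hi b => if a = b then some .one else none
  | .hi a, .lo b => if a = b then some .one else none
  | _, _ => none


def eqCompl {Q : Type*} : EQCarrier Q → EQCarrier Q
  | .zero => .one
  | .one => .zero
  | .lo a => .hi a
  | .hi a => .lo a

section Aux

variable {Q : Type*} [DecidableEq Q] (mul : Q → Q → Q)

lemma eq_opz : ∀ x : EQCarrier Q, eqOplus mul x .zero = some x := by
  rintro (_|_|a|a) <;> rfl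

lemma eq_zop : ∀ x : EQCarrier Q, eqOplus mul .zero x = some x := by
  rintro (_|_|a|a) <;> rfl

lemma eq_inv_zero {q r : EQCarrier Q} (h : eqOplus mul q r = some .zero) :
    q = .zero ∧ r = .zero := by
  rcases q with _|_|b|b <;> rcases r with _|_|c|c <;>
    simp_all [eqOplus] <;> split_ifs at h <;> simp_all

lemma eq_inv_lo {d : Q} {q r : EQCarrier Q} (h : eqOplus mul q r = some (.lo d)) :
    (q = .zero ∧ r = .lo d) ∨ (q = .lo d ∧ r = .zero) := by
  rcases q with _|_|b|b <;> rcases r with _|_|c|c <;>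
    simp_all [eqOplus] <;> split_ifs at h <;> simp_all

lemma eq_inv_hi {d : Q} {q r : EQCarrier Q} (h : eqOplus mul q r = some (.hi d)) :
    (q = .zero ∧ r = .hi d) ∨ (q = .hi d ∧ r = .zero) ∨
      (∃ b c, q = .lo b ∧ r = .lo c ∧ mul b c = d) := by
  rcases q with _|_|b|b <;> rcases r with _|_|c|c <;>
    simp_all [eqOplus] <;> split_ifs at h <;> simp_all

lemma eq_assoc (hsemi : ∀ a b, mul (mul a b) a = b) :
    ∀ p q r s t : EQCarrier Q, eqOplus mul q r = some s → eqOplus mul p s = some t →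
      ∃ u, eqOplus mul p q = some u ∧ eqOplus mul u r = some t := by
  intro p q r s t hqr hps
  cases p with
  | zero =>
      refine ⟨q, eq_zop mul _, ?_⟩
      rw [eq_zop] at hps
      injection hps with h
      rwa [h] at hqr
  | one =>
      rcases s with _|_|d|d
      · obtain ⟨rfl, rfl⟩ := eq_inv_zero mul hqr
        rw [eq_opz] at hps
        exact ⟨.one, eq_opz mul _, hps⟩
      · simp [eqOplus] at hps
      · simp [eqOplus] at hps
      · simp [eqOplus] at hps
  | lo a =>
      rcases s with _|_|d|d
      · obtain ⟨rfl, rfl⟩ := eq_inv_zero mul hqr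
        exact ⟨.lo a, eq_opz mul _, hps⟩
      · simp [eqOplus] at hps
      · -- s = lo d : t = hi (a·d)
        rcases eq_inv_lo mul hqr with ⟨rfl, rfl⟩ | ⟨rfl, rfl⟩
        · exact ⟨.lo a, eq_opz mul _, hps⟩
        · simp only [eqOplus] at hps
          exact ⟨.hi (mul a d), rfl, (eq_opz mul _).trans hps⟩
      · -- s = hi d : a = d, t = one
        have had : a = d ∧ EQCarrier.one = t := by
          simpa [eqOplus] using hps
        obtain ⟨rfl, rfl⟩ := had
        rcases eq_inv_hi mul hqr with ⟨rfl, rfl⟩ | ⟨rfl, rfl⟩ | ⟨b, c, rfl, rfl, hbc⟩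
        · exact ⟨.lo a, eq_opz mul _, by simp [eqOplus]⟩
        · exact ⟨.one, by simp [eqOplus], eq_opz mul _⟩
        · refine ⟨.hi (mul a b), rfl, ?_⟩
          have : mul a b = c := by
            rw [← hbc, hsemi]
          simp [eqOplus, this]
  | hi a =>
      rcases s with _|_|d|d
      · obtain ⟨rfl, rfl⟩ := eq_inv_zero mul hqr
        exact ⟨.hi a, eq_opz mul _, hps⟩
      · simp [eqOplus] at hps
      · -- s = lo d : a = d, t = one
        have had : a = d ∧ EQCarrier.one = t := by
          simpa [eqOplus] using hps
        obtain ⟨rfl, rfl⟩ := had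
        rcases eq_inv_lo mul hqr with ⟨rfl, rfl⟩ | ⟨rfl, rfl⟩
        · exact ⟨.hi a, eq_opz mul _, by simp [eqOplus]⟩
        · exact ⟨.one, by simp [eqOplus], eq_opz mul _⟩
      · simp [eqOplus] at hps

end Aux

/-- If `(Q,·)` is a totally symmetric quasigroup (commutative and
semisymmetric: `(a·b)·a = b`), then `E(Q,·)` is an effect algebra. -/
theorem stmt_12 {Q : Type*} [DecidableEq Q] (mul : Q → Q → Q)
    (hcomm : ∀ a b, mul a b = mul b a)
    (hsemi : ∀ a b, mul (mul a b) a = b) :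
    ∃ A : EffectAlgebra (EQCarrier Q),
      A.oplus = eqOplus mul ∧ A.zero = .zero ∧ A.one = .one := by
  refine ⟨⟨eqOplus mul, .zero, .one, ?_, eq_assoc mul hsemi, eqCompl, ?_, ?_, ?_⟩, rfl, rfl, rfl⟩
  · rintro (_|_|a|a) (_|_|b|b) <;>
      simp [eqOplus, hcomm, eq_comm]
  · rintro (_|_|a|a) <;> simp [eqOplus, eqCompl]
  · rintro (_|_|a|a) (_|_|b|b) h <;>
      simp_all [eqOplus, eqCompl] <;> split_ifs at h <;> simp_all
  · rintro (_|_|a|a) h <;> simp_all [eqOplus]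
end

section
/- Let Q = {1, 2, 3} with the two totally symmetric quasigroup operations ·₁ (given by 1·₁1=1, 1·₁2=3, 1·₁3=2, 2·₁2=2, 2·₁3=1, 3·₁3=3) and ·₂ (given by 1·₂1=2, 1·₂2=1, 1·₂3=3, 2·₂2=3, 2·₂3=2, 3·₂3=1). Then the effect algebras E(Q, ·₁) and E(Q, ·₂) are not isomorphic, even though they have the same underlying set, the same partial order, and the same orthosupplementation. -/
/-- The first quasigroup operation on `{1,2,3}` (coded as `Fin 3`):
`1·1=1, 1·2=3, 1·3=2, 2·2=2, 2·3=1, 3·3=3`. -/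
def mul1 (a b : Fin 3) : Fin 3 := if a = b then a else -(a + b)

/-- The second quasigroup operation on `{1,2,3}` (coded as `Fin 3`):
`1·1=2, 1·2=1, 1·3=3, 2·2=3, 2·3=2, 3·3=1`. -/
def mul2 (a b : Fin 3) : Fin 3 := 1 - (a + b)

/- `E(Q,·)` has an element `x` with `x ⊕ x ⊕ x = 1` exactly when `Q` has an idempotent
`q · q = q` (take `x = (q,0)`). Such an element is carried to one by any isomorphism;
`0` is idempotent for `·₁`, while `·₂` has no idempotent since `1 - 2a = a` has no solution
mod 3. -/

def IsThird {Q : Type*} [DecidableEq Q] (mul : Q → Q → Q) (x : EQCarrier Q) : Prop :=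
  ∃ y, eqOplus mul x x = some y ∧ eqOplus mul x y = some .one

theorem isThird_iff {Q : Type*} [DecidableEq Q] {mul : Q → Q → Q} {x : EQCarrier Q} :
    IsThird mul x ↔ ∃ q, x = .lo q ∧ mul q q = q := by
  constructor
  · rintro ⟨y, hxx, hxy⟩
    cases x with
    | zero =>
      cases Option.some_inj.mp hxx
      cases hxy
    | one => cases hxx
    | hi q => cases hxx
    | lo q =>
      cases Option.some_inj.mp hxx
      by_cases hq : q = mul q q
      · exact ⟨q, rfl, hq.symm⟩
      · simp [eqOplus, hq] at hxy
  · rintro ⟨q, rfl, hq⟩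
    exact ⟨.hi q, by simp [eqOplus, hq], by simp [eqOplus]⟩

theorem IsThird.map {Q Q' : Type*} [DecidableEq Q] [DecidableEq Q'] {mul : Q → Q → Q}
    {mul' : Q' → Q' → Q'} {φ : EQCarrier Q → EQCarrier Q'} (hone : φ .one = .one)
    (hφ : ∀ a b c, eqOplus mul a b = some c → eqOplus mul' (φ a) (φ b) = some (φ c))
    {x : EQCarrier Q} (hx : IsThird mul x) : IsThird mul' (φ x) := by
  obtain ⟨y, hxx, hxy⟩ := hx
  exact ⟨φ y, hφ _ _ _ hxx, hone ▸ hφ _ _ _ hxy⟩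

theorem mul2_self_ne (a : Fin 3) : mul2 a a ≠ a := by
  fin_cases a <;> decide

/-- The effect algebras `E(Q,·₁)` and `E(Q,·₂)` are not isomorphic. -/
theorem stmt_14 :
    ¬ ∃ φ : EQCarrier (Fin 3) → EQCarrier (Fin 3),
      Function.Bijective φ ∧
      (∀ a b, (eqOplus mul1 a b).isSome ↔ (eqOplus mul2 (φ a) (φ b)).isSome) ∧
      φ .one = .one ∧
      (∀ a b c, eqOplus mul1 a b = some c →
        eqOplus mul2 (φ a) (φ b) = some (φ c)) := by
  rintro ⟨φ, -, -, hone, hφ⟩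
  have hthird : IsThird mul1 (.lo 0) := isThird_iff.mpr ⟨0, rfl, rfl⟩
  obtain ⟨q, -, hq⟩ := isThird_iff.mp (hthird.map hone hφ)
  exact mul2_self_ne q hq
end
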